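/- arXiv:2109.07030 — 2 statements merged into one kernel-verified Lean document; each statement's English description precedes it below -/
import Mathlib

section
/- Under the sequential randomization assumption Y_{a(0),a(1)} ⟂ A(0) | L(0) and Y_{a(0),a(1)} ⟂ A(1) | (A(0), L(0), L(1)), consistency Y = Y_{A(0),A(1)}, and positivity, the counterfactual mean satisfies the g-formula: E[Y_{a(0),a(1)}] = E[ E[ E[Y | A(0)=a(0), A(1)=a(1), L(0), L(1)] | A(0)=a(0), L(0) ] ]. -/
open Finset MeasureTheory

open scoped Classical

/-- Probability of an event on a finite outcome space with mass function `p`. -/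
noncomputable def pr {Ω : Type*} [Fintype Ω] (p : Ω → ℝ) (E : Ω → Prop) : ℝ :=
  ∑ ω, if E ω then p ω else 0

/-- Conditional expectation `E[f | E]` on a finite outcome space. -/
noncomputable def cexp {Ω : Type*} [Fintype Ω] (p : Ω → ℝ) (f : Ω → ℝ) (E : Ω → Prop) : ℝ :=
  (∑ ω, if E ω then p ω * f ω else 0) / pr p E

/-- Conditional probability `P(E | F)` on a finite outcome space. -/
noncomputable def cprob {Ω : Type*} [Fintype Ω] (p : Ω → ℝ) (E F : Ω → Prop) : ℝ :=
  pr p (fun ω => E ω ∧ F ω) / pr p F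

/-- Expectation on a finite outcome space. -/
noncomputable def pexp {Ω : Type*} [Fintype Ω] (p : Ω → ℝ) (f : Ω → ℝ) : ℝ :=
  ∑ ω, p ω * f ω

/-- `S` is conditionally independent of `T` given `C`:  for every pair of (bounded) test
functions `F, G` and every value `c` of `C` with positive probability, the conditional
expectation of the product factorizes. -/
def CondIndep {Ω α β γ : Type*} [Fintype Ω] (p : Ω → ℝ)
    (S : Ω → α) (T : Ω → β) (C : Ω → γ) : Prop :=
  ∀ (F : α → ℝ) (G : β → ℝ) (c : γ), pr p (fun ω => C ω = c) ≠ 0 →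
    cexp p (fun ω => F (S ω) * G (T ω)) (fun ω => C ω = c) =
      cexp p (fun ω => F (S ω)) (fun ω => C ω = c) *
        cexp p (fun ω => G (T ω)) (fun ω => C ω = c)

/-!
Split `E[Y_{a0,a1}]` over the fibres of `L0`. On a fibre of positive mass, sequential
randomization at the first occasion allows conditioning additionally on `A0 = a0` (positivity
keeps this event non-null); splitting further over `L1`, randomization at the second occasion
allows conditioning on `A1 = a1` as well, and there consistency replaces `Y_{a0,a1}` by `Y`.
Each conditioning step compares `E[1{S = a} T | C] = P(S = a | C) E[T | S = a, C]` with the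
factorization given by conditional independence and cancels `P(S = a | C) > 0`.
-/

section FiniteProbability

variable {Ω : Type*} [Fintype Ω] {p : Ω → ℝ}

theorem cprob_ne_zero_iff {E F : Ω → Prop} :
    cprob p E F ≠ 0 ↔ pr p (fun ω => E ω ∧ F ω) ≠ 0 ∧ pr p F ≠ 0 :=
  div_ne_zero_iff

theorem cexp_congr {E : Ω → Prop} {f g : Ω → ℝ} (h : ∀ ω, E ω → f ω = g ω) :
    cexp p f E = cexp p g E := by
  unfold cexp
  congr 1
  exact Finset.sum_congr rfl fun ω _ => ite_congr rfl (fun hω => by rw [h ω hω]) fun _ => rfl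

theorem cexp_congr_event {E F : Ω → Prop} (f : Ω → ℝ) (h : ∀ ω, E ω ↔ F ω) :
    cexp p f E = cexp p f F := by
  rw [show E = F from funext fun ω => propext (h ω)]

theorem cexp_eq_of_forall_eq {E : Ω → Prop} {f : Ω → ℝ} {r : ℝ} (hE : pr p E ≠ 0)
    (h : ∀ ω, E ω → f ω = r) : cexp p f E = r := by
  have hsum : (∑ ω, if E ω then p ω * r else 0) = pr p E * r := by
    rw [pr, Finset.sum_mul]
    exact Finset.sum_congr rfl fun ω _ => by split_ifs <;> ring
  rw [cexp_congr h, cexp, hsum, mul_div_cancel_left₀ _ hE]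

theorem cexp_indicator (E F : Ω → Prop) :
    cexp p (fun ω => if E ω then 1 else 0) F = cprob p E F := by
  unfold cexp cprob pr
  congr 1
  exact Finset.sum_congr rfl fun ω _ => by by_cases hE : E ω <;> by_cases hF : F ω <;> simp [hE, hF]

theorem p_eq_zero_of_pr_eq_zero (hp : ∀ ω, 0 ≤ p ω) {E : Ω → Prop} (h : pr p E = 0) {ω : Ω}
    (hω : E ω) : p ω = 0 := by
  have hnonneg : ∀ ω ∈ Finset.univ, 0 ≤ if E ω then p ω else 0 := fun ω _ => by
    split_ifs
    exacts [hp ω, le_rfl]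
  simpa [hω] using (Finset.sum_eq_zero_iff_of_nonneg hnonneg).1 h ω (Finset.mem_univ ω)

theorem pr_mul_cexp (hp : ∀ ω, 0 ≤ p ω) (f : Ω → ℝ) (E : Ω → Prop) :
    pr p E * cexp p f E = ∑ ω, if E ω then p ω * f ω else 0 := by
  by_cases h : pr p E = 0
  · rw [h, zero_mul]
    refine (Finset.sum_eq_zero fun ω _ => ?_).symm
    split_ifs with hω
    · rw [p_eq_zero_of_pr_eq_zero hp h hω, zero_mul]
    · rfl
  · rw [cexp, mul_div_cancel₀ _ h]

theorem cexp_indicator_mul (hp : ∀ ω, 0 ≤ p ω) (E F : Ω → Prop) (f : Ω → ℝ) :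
    cexp p (fun ω => (if E ω then 1 else 0) * f ω) F =
      cprob p E F * cexp p f (fun ω => E ω ∧ F ω) := by
  rw [cprob, div_mul_eq_mul_div, pr_mul_cexp hp, cexp]
  congr 1
  exact Finset.sum_congr rfl fun ω _ => by by_cases hE : E ω <;> by_cases hF : F ω <;> simp [hE, hF]

theorem cexp_and_eq_of_condIndep {α γ : Type*} (hp : ∀ ω, 0 ≤ p ω) {S : Ω → α} {T : Ω → ℝ}
    {C : Ω → γ} (hST : CondIndep p S T C) {a : α} {c : γ}
    (hpos : cprob p (fun ω => S ω = a) (fun ω => C ω = c) ≠ 0) :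
    cexp p T (fun ω => S ω = a ∧ C ω = c) = cexp p T (fun ω => C ω = c) := by
  have hfactor := hST (fun s => if s = a then 1 else 0) (fun t => t) c (cprob_ne_zero_iff.1 hpos).2
  rw [cexp_indicator_mul hp, cexp_indicator] at hfactor
  exact mul_left_cancel₀ hpos hfactor

theorem sum_ite_eq_sum_pr_mul_cexp {γ : Type*} (hp : ∀ ω, 0 ≤ p ω) (f : Ω → ℝ)
    (E : Ω → Prop) (D : Ω → γ) :
    (∑ ω, if E ω then p ω * f ω else 0) = ∑ d ∈ Finset.univ.image D,
      pr p (fun ω => E ω ∧ D ω = d) * cexp p f (fun ω => E ω ∧ D ω = d) := by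
  simp only [pr_mul_cexp hp]
  rw [Finset.sum_comm]
  exact Finset.sum_congr rfl fun ω _ => by by_cases hE : E ω <;> simp [hE]

theorem sum_ite_congr_fiberwise {γ : Type*} (hp : ∀ ω, 0 ≤ p ω) {f g : Ω → ℝ} {E : Ω → Prop}
    (D : Ω → γ) (h : ∀ d, pr p (fun ω => E ω ∧ D ω = d) ≠ 0 →
      cexp p f (fun ω => E ω ∧ D ω = d) = cexp p g (fun ω => E ω ∧ D ω = d)) :
    (∑ ω, if E ω then p ω * f ω else 0) = ∑ ω, if E ω then p ω * g ω else 0 := by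
  rw [sum_ite_eq_sum_pr_mul_cexp hp f E D, sum_ite_eq_sum_pr_mul_cexp hp g E D]
  refine Finset.sum_congr rfl fun d _ => ?_
  by_cases hd : pr p (fun ω => E ω ∧ D ω = d) = 0
  · rw [hd, zero_mul, zero_mul]
  · rw [h d hd]

theorem cexp_congr_fiberwise {γ : Type*} (hp : ∀ ω, 0 ≤ p ω) {f g : Ω → ℝ} {E : Ω → Prop}
    (D : Ω → γ) (h : ∀ d, pr p (fun ω => E ω ∧ D ω = d) ≠ 0 →
      cexp p f (fun ω => E ω ∧ D ω = d) = cexp p g (fun ω => E ω ∧ D ω = d)) :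
    cexp p f E = cexp p g E := by
  rw [cexp, cexp, sum_ite_congr_fiberwise hp D h]

theorem pexp_congr_fiberwise {γ : Type*} (hp : ∀ ω, 0 ≤ p ω) {f g : Ω → ℝ} (C : Ω → γ)
    (h : ∀ c, pr p (fun ω => C ω = c) ≠ 0 →
      cexp p f (fun ω => C ω = c) = cexp p g (fun ω => C ω = c)) :
    pexp p f = pexp p g := by
  have hsum := sum_ite_congr_fiberwise hp (E := fun _ => True) C (by simpa only [true_and] using h)
  simpa only [pexp, if_true] using hsum

end FiniteProbability

theorem stmt_6_general {Ω ℒ0 ℒ1 : Type*} [Fintype Ω]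
    (p : Ω → ℝ) (hp : ∀ ω, 0 ≤ p ω)
    (A0 A1 : Ω → Bool) (L0 : Ω → ℒ0) (L1 : Ω → ℒ1)
    (Y : Ω → ℝ) (Y' : Bool → Bool → Ω → ℝ)
    (a0 a1 : Bool)
    (hcons : ∀ ω, Y ω = Y' (A0 ω) (A1 ω) ω)
    (hSRA0 : CondIndep p A0 (fun ω => Y' a0 a1 ω) L0)
    (hSRA1 : CondIndep p A1 (fun ω => Y' a0 a1 ω) (fun ω => (A0 ω, L0 ω, L1 ω)))
    (hpos0 : ∀ (a : Bool) l0, pr p (fun ω => L0 ω = l0) ≠ 0 →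
      0 < cprob p (fun ω => A0 ω = a) (fun ω => L0 ω = l0))
    (hpos1 : ∀ (a a' : Bool) l0 l1,
      pr p (fun ω => A0 ω = a' ∧ L0 ω = l0 ∧ L1 ω = l1) ≠ 0 →
      0 < cprob p (fun ω => A1 ω = a) (fun ω => A0 ω = a' ∧ L0 ω = l0 ∧ L1 ω = l1)) :
    pexp p (Y' a0 a1) =
      pexp p (fun ω =>
        cexp p
          (fun ω' =>
            cexp p Y (fun ω'' =>
              A0 ω'' = a0 ∧ A1 ω'' = a1 ∧ L0 ω'' = L0 ω ∧ L1 ω'' = L1 ω'))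
          (fun ω' => A0 ω' = a0 ∧ L0 ω' = L0 ω)) := by
  have occasion1 : ∀ l0 l1, pr p (fun ω => A0 ω = a0 ∧ L0 ω = l0 ∧ L1 ω = l1) ≠ 0 →
      cexp p (Y' a0 a1) (fun ω => A0 ω = a0 ∧ L0 ω = l0 ∧ L1 ω = l1) =
        cexp p Y (fun ω => A0 ω = a0 ∧ A1 ω = a1 ∧ L0 ω = l0 ∧ L1 ω = l1) := by
    intro l0 l1 hl
    have hdrop := cexp_and_eq_of_condIndep hp hSRA1 (c := (a0, l0, l1))
      (by simpa only [Prod.mk.injEq] using (hpos1 a1 a0 l0 l1 hl).ne')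
    simp only [Prod.mk.injEq] at hdrop
    rw [← hdrop, cexp_congr_event _ fun ω => and_left_comm]
    exact cexp_congr fun ω hω => by rw [hcons, hω.1, hω.2.1]
  have occasion0 : ∀ l0, pr p (fun ω => L0 ω = l0) ≠ 0 →
      cexp p (Y' a0 a1) (fun ω => L0 ω = l0) =
        cexp p (fun ω' => cexp p Y (fun ω'' =>
            A0 ω'' = a0 ∧ A1 ω'' = a1 ∧ L0 ω'' = l0 ∧ L1 ω'' = L1 ω'))
          (fun ω' => A0 ω' = a0 ∧ L0 ω' = l0) := by
    intro l0 hl0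
    rw [← cexp_and_eq_of_condIndep hp hSRA0 (hpos0 a0 l0 hl0).ne']
    refine cexp_congr_fiberwise hp L1 fun l1 hl1 => ?_
    simp only [and_assoc] at hl1 ⊢
    rw [occasion1 l0 l1 hl1]
    exact (cexp_eq_of_forall_eq hl1 fun ω hω => by rw [hω.2.2]).symm
  refine pexp_congr_fiberwise hp L0 fun l0 hl0 => ?_
  rw [occasion0 l0 hl0]
  exact (cexp_eq_of_forall_eq hl0 fun ω hω => by rw [hω]).symm

/-- two-occasion g-formula: under sequential randomization, consistency
and positivity, `E[Y_{a0,a1}] = E[ E[ E[Y | A0=a0, A1=a1, L0, L1] | A0=a0, L0 ] ]`. -/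
theorem stmt_6 {Ω ℒ0 ℒ1 : Type*} [Fintype Ω]
    (p : Ω → ℝ) (hp : ∀ ω, 0 ≤ p ω) (hsum : ∑ ω, p ω = 1)
    (A0 A1 : Ω → Bool) (L0 : Ω → ℒ0) (L1 : Ω → ℒ1)
    (Y : Ω → ℝ) (Y' : Bool → Bool → Ω → ℝ)
    (a0 a1 : Bool)
    (hcons : ∀ ω, Y ω = Y' (A0 ω) (A1 ω) ω)
    (hSRA0 : CondIndep p A0 (fun ω => Y' a0 a1 ω) L0)
    (hSRA1 : CondIndep p A1 (fun ω => Y' a0 a1 ω) (fun ω => (A0 ω, L0 ω, L1 ω)))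
    (hpos0 : ∀ (a : Bool) l0, pr p (fun ω => L0 ω = l0) ≠ 0 →
      0 < cprob p (fun ω => A0 ω = a) (fun ω => L0 ω = l0))
    (hpos1 : ∀ (a a' : Bool) l0 l1,
      pr p (fun ω => A0 ω = a' ∧ L0 ω = l0 ∧ L1 ω = l1) ≠ 0 →
      0 < cprob p (fun ω => A1 ω = a) (fun ω => A0 ω = a' ∧ L0 ω = l0 ∧ L1 ω = l1)) :
    pexp p (Y' a0 a1) =
      pexp p (fun ω =>
        cexp p
          (fun ω' =>
            cexp p Y (fun ω'' =>
              A0 ω'' = a0 ∧ A1 ω'' = a1 ∧ L0 ω'' = L0 ω ∧ L1 ω'' = L1 ω'))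
          (fun ω' => A0 ω' = a0 ∧ L0 ω' = L0 ω)) :=
  stmt_6_general p hp A0 A1 L0 L1 Y Y' a0 a1 hcons hSRA0 hSRA1 hpos0 hpos1
end

section
/- Under the two-occasion sequential randomization assumption with positivity and consistency, the counterfactual mean is identified by inverse probability weighting: E[Y_{a(0),a(1)}] = E[ Y · 1{A(0)=a(0), A(1)=a(1)} / ( P(A(1)=a(1) | A(0), L(0), L(1)) · P(A(0)=a(0) | L(0)) ) ]. -/
open Finset MeasureTheory

open scoped Classical

/-!
Within a stratum `C = c`, sequential randomization makes the treatment indicator `1{A = a}`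
uncorrelated with the potential outcome, so `E[1{A = a} Z; C = c] = P(A = a | C = c) E[Z; C = c]`.
Dividing by the propensity `P(A = a | C)`, positive by positivity, therefore removes the indicator
from `E[1{A = a} Z h(C) / P(A = a | C)]`. This is done first for `A(1)` with `C = (A(0), L(0), L(1))`
and then for `A(0)` with `C = L(0)`; consistency identifies `Y` with `Y_{a(0),a(1)}` on the event
`A(0) = a(0), A(1) = a(1)`.
-/

section

variable {Ω : Type*} [Fintype Ω] (p : Ω → ℝ)

theorem sum_filter_eq_zero_of_pr_eq_zero (hp : ∀ ω, 0 ≤ p ω) {E : Ω → Prop} (hE : pr p E = 0)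
    (f : Ω → ℝ) : ∑ ω ∈ univ.filter E, p ω * f ω = 0 := by
  have hzero : ∀ ω ∈ univ.filter E, p ω = 0 :=
    (sum_eq_zero_iff_of_nonneg fun ω _ => hp ω).mp (by rwa [pr, ← sum_filter] at hE)
  exact sum_eq_zero fun ω hω => by rw [hzero ω hω, zero_mul]

theorem cexp_mul_pr {E : Ω → Prop} (hE : pr p E ≠ 0) (f : Ω → ℝ) :
    cexp p f E * pr p E = ∑ ω ∈ univ.filter E, p ω * f ω := by
  rw [cexp, div_mul_cancel₀ _ hE, sum_filter]

theorem cexp_ite_one_zero (P : Ω → Prop) [DecidablePred P] (E : Ω → Prop) :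
    cexp p (fun ω => if P ω then 1 else 0) E = cprob p P E := by
  simp only [cexp, cprob, pr]
  congr 1
  refine sum_congr rfl fun ω _ => ?_
  split_ifs <;> simp_all

theorem sum_filter_mul_apply {γ : Type*} (C : Ω → γ) (c : γ) (f : Ω → ℝ) (g : γ → ℝ) :
    ∑ ω ∈ univ.filter (fun ω => C ω = c), p ω * (f ω * g (C ω)) =
      g c * ∑ ω ∈ univ.filter (fun ω => C ω = c), p ω * f ω := by
  rw [mul_sum]
  refine sum_congr rfl fun ω hω => ?_
  rw [(mem_filter.mp hω).2]
  ring

variable {α γ : Type*} [DecidableEq α] {A : Ω → α} {Z : Ω → ℝ} {C : Ω → γ}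

theorem CondIndep.sum_filter_ite_mul (hCI : CondIndep p A Z C) (a : α) {c : γ}
    (hc : pr p (fun ω => C ω = c) ≠ 0) :
    ∑ ω ∈ univ.filter (fun ω => C ω = c), p ω * ((if A ω = a then 1 else 0) * Z ω) =
      cprob p (fun ω => A ω = a) (fun ω => C ω = c) *
        ∑ ω ∈ univ.filter (fun ω => C ω = c), p ω * Z ω := by
  have hfactor := hCI (fun x => if x = a then 1 else 0) id c hc
  rw [← cexp_mul_pr p hc, ← cexp_mul_pr p hc, ← cexp_ite_one_zero]
  simp only [id] at hfactor
  rw [hfactor, mul_assoc]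

theorem CondIndep.pexp_inverse_propensity_weight (hp : ∀ ω, 0 ≤ p ω) (hCI : CondIndep p A Z C)
    (a : α) (hpos : ∀ c, pr p (fun ω => C ω = c) ≠ 0 →
      0 < cprob p (fun ω => A ω = a) (fun ω => C ω = c)) (h : γ → ℝ) :
    pexp p (fun ω => (if A ω = a then 1 else 0) * Z ω *
        (h (C ω) / cprob p (fun ω' => A ω' = a) (fun ω' => C ω' = C ω))) =
      pexp p (fun ω => Z ω * h (C ω)) := by
  have hmaps : ∀ ω ∈ univ, C ω ∈ univ.image C := fun ω _ => mem_image_of_mem C (mem_univ ω)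
  rw [pexp, pexp, ← sum_fiberwise_of_maps_to hmaps, ← sum_fiberwise_of_maps_to hmaps]
  refine sum_congr rfl fun c _ => ?_
  rw [sum_filter_mul_apply p C c (fun ω => (if A ω = a then 1 else 0) * Z ω)
      (fun c' => h c' / cprob p (fun ω' => A ω' = a) (fun ω' => C ω' = c')),
    sum_filter_mul_apply p C c Z h]
  by_cases hc : pr p (fun ω => C ω = c) = 0
  · rw [sum_filter_eq_zero_of_pr_eq_zero p hp hc, sum_filter_eq_zero_of_pr_eq_zero p hp hc]
    ring
  · rw [hCI.sum_filter_ite_mul p a hc, ← mul_assoc, div_mul_cancel₀ _ (hpos c hc).ne']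

end

theorem stmt_7_general {Ω ℒ0 ℒ1 : Type*} [Fintype Ω]
    (p : Ω → ℝ) (hp : ∀ ω, 0 ≤ p ω)
    (A0 A1 : Ω → Bool) (L0 : Ω → ℒ0) (L1 : Ω → ℒ1)
    (Y : Ω → ℝ) (Y' : Bool → Bool → Ω → ℝ)
    (a0 a1 : Bool)
    (hcons : ∀ ω, Y ω = Y' (A0 ω) (A1 ω) ω)
    (hSRA0 : CondIndep p A0 (fun ω => Y' a0 a1 ω) L0)
    (hSRA1 : CondIndep p A1 (fun ω => Y' a0 a1 ω) (fun ω => (A0 ω, L0 ω, L1 ω)))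
    (hpos0 : ∀ (a : Bool) l0, pr p (fun ω => L0 ω = l0) ≠ 0 →
      0 < cprob p (fun ω => A0 ω = a) (fun ω => L0 ω = l0))
    (hpos1 : ∀ (a a' : Bool) l0 l1,
      pr p (fun ω => A0 ω = a' ∧ L0 ω = l0 ∧ L1 ω = l1) ≠ 0 →
      0 < cprob p (fun ω => A1 ω = a) (fun ω => A0 ω = a' ∧ L0 ω = l0 ∧ L1 ω = l1)) :
    pexp p (Y' a0 a1) =
      pexp p (fun ω =>
        Y ω * (if A0 ω = a0 ∧ A1 ω = a1 then (1 : ℝ) else 0) /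
          (cprob p (fun ω' => A1 ω' = a1)
              (fun ω' => A0 ω' = A0 ω ∧ L0 ω' = L0 ω ∧ L1 ω' = L1 ω) *
            cprob p (fun ω' => A0 ω' = a0) (fun ω' => L0 ω' = L0 ω))) := by
  have hpos1_stratum : ∀ c : Bool × ℒ0 × ℒ1, pr p (fun ω => (A0 ω, L0 ω, L1 ω) = c) ≠ 0 →
      0 < cprob p (fun ω => A1 ω = a1) (fun ω => (A0 ω, L0 ω, L1 ω) = c) := by
    rintro ⟨a', l0, l1⟩
    simpa only [Prod.mk.injEq] using hpos1 a1 a' l0 l1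
  have hstrip0 := hSRA0.pexp_inverse_propensity_weight p hp a0 (hpos0 a0) fun _ => 1
  have hstrip1 := hSRA1.pexp_inverse_propensity_weight p hp a1 hpos1_stratum fun c =>
    (if c.1 = a0 then 1 else 0) / cprob p (fun ω' => A0 ω' = a0) (fun ω' => L0 ω' = c.2.1)
  calc pexp p (Y' a0 a1) = pexp p (fun ω => Y' a0 a1 ω * 1) := by simp only [mul_one]
    _ = pexp p (fun ω => Y' a0 a1 ω * ((if A0 ω = a0 then 1 else 0) /
          cprob p (fun ω' => A0 ω' = a0) (fun ω' => L0 ω' = L0 ω))) := by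
      rw [← hstrip0]
      congr 1
      funext ω
      ring
    _ = _ := by
      rw [← hstrip1]
      congr 1
      funext ω
      simp only [Prod.mk.injEq, hcons ω]
      by_cases h0 : A0 ω = a0 <;> by_cases h1 : A1 ω = a1 <;> simp [h0, h1]
      ring

/-- two-occasion IPW identification: under sequential randomization,
consistency and positivity, the counterfactual mean equals the inverse probability
weighted observed outcome mean. -/
theorem stmt_7 {Ω ℒ0 ℒ1 : Type*} [Fintype Ω]
    (p : Ω → ℝ) (hp : ∀ ω, 0 ≤ p ω) (hsum : ∑ ω, p ω = 1)
    (A0 A1 : Ω → Bool) (L0 : Ω → ℒ0) (L1 : Ω → ℒ1)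
    (Y : Ω → ℝ) (Y' : Bool → Bool → Ω → ℝ)
    (a0 a1 : Bool)
    (hcons : ∀ ω, Y ω = Y' (A0 ω) (A1 ω) ω)
    (hSRA0 : CondIndep p A0 (fun ω => Y' a0 a1 ω) L0)
    (hSRA1 : CondIndep p A1 (fun ω => Y' a0 a1 ω) (fun ω => (A0 ω, L0 ω, L1 ω)))
    (hpos0 : ∀ (a : Bool) l0, pr p (fun ω => L0 ω = l0) ≠ 0 →
      0 < cprob p (fun ω => A0 ω = a) (fun ω => L0 ω = l0))
    (hpos1 : ∀ (a a' : Bool) l0 l1,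
      pr p (fun ω => A0 ω = a' ∧ L0 ω = l0 ∧ L1 ω = l1) ≠ 0 →
      0 < cprob p (fun ω => A1 ω = a) (fun ω => A0 ω = a' ∧ L0 ω = l0 ∧ L1 ω = l1)) :
    pexp p (Y' a0 a1) =
      pexp p (fun ω =>
        Y ω * (if A0 ω = a0 ∧ A1 ω = a1 then (1 : ℝ) else 0) /
          (cprob p (fun ω' => A1 ω' = a1)
              (fun ω' => A0 ω' = A0 ω ∧ L0 ω' = L0 ω ∧ L1 ω' = L1 ω) *
            cprob p (fun ω' => A0 ω' = a0) (fun ω' => L0 ω' = L0 ω))) :=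
  stmt_7_general p hp A0 A1 L0 L1 Y Y' a0 a1 hcons hSRA0 hSRA1 hpos0 hpos1
end
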